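/- Let μ̃ be the bilinear skew-symmetric map on ℝ^7 with nonzero basis brackets [e1,e2]=(3√34/68)e3, [e1,e3]=(√119/34)e4, [e1,e4]=(3√187/187)e5-(7√374/748)e6, [e1,e5]=(√374/68)e7, [e2,e3]=(3√1309/374)e5+(√2618/374)e6, [e2,e4]=(3√34/68)e7. Then μ̃ satisfies the Jacobi identity, D = diag(1,2,3,4,5,5,6) is a derivation of (ℝ^7,μ̃), and m(μ̃) = -(29/34)·Id + (13/68)·D; in particular m(μ̃) = diag(-45/68,-8/17,-19/68,-3/34,7/68,7/68,5/17). -/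

import Mathlib

open Finset

noncomputable section

/-- `ℝ⁷` with its standard basis and standard inner product. -/
abbrev V7 : Type := Fin 7 → ℝ

/-- The standard basis vector `e i`. -/
def e (i : Fin 7) : V7 := Pi.single i 1

/-- The standard inner product on `ℝ⁷`. -/
def dot (x y : V7) : ℝ := ∑ i, x i * y i

/-- Structure constants built from a list of entries `(i, j, k, a)`, each meaning that
`μ (e i) (e j)` has component `a` along `e k` (and `μ (e j) (e i)` has component `-a`);
all unlisted basis brackets are `0`. -/
def toC (L : List (Fin 7 × Fin 7 × Fin 7 × ℝ)) (i j k : Fin 7) : ℝ :=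
  (L.map fun t =>
      (if t.1 = i ∧ t.2.1 = j ∧ t.2.2.1 = k then t.2.2.2 else 0)
    - (if t.1 = j ∧ t.2.1 = i ∧ t.2.2.1 = k then t.2.2.2 else 0)).sum

/-- The bilinear skew-symmetric map on `ℝ⁷` with structure constants `c`. -/
def br (c : Fin 7 → Fin 7 → Fin 7 → ℝ) (x y : V7) : V7 :=
  fun k => ∑ i, ∑ j, x i * y j * c i j k

lemma br_add_left (c : Fin 7 → Fin 7 → Fin 7 → ℝ) (x x' y : V7) :
    br c (x + x') y = br c x y + br c x' y := by
  funext k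
  simp only [br, Pi.add_apply, ← Finset.sum_add_distrib]
  exact Finset.sum_congr rfl fun i _ => Finset.sum_congr rfl fun j _ => by ring

lemma br_smul_left (c : Fin 7 → Fin 7 → Fin 7 → ℝ) (r : ℝ) (x y : V7) :
    br c (r • x) y = r • br c x y := by
  funext k
  simp only [br, Pi.smul_apply, smul_eq_mul, Finset.mul_sum]
  exact Finset.sum_congr rfl fun i _ => Finset.sum_congr rfl fun j _ => by ring

lemma br_add_right (c : Fin 7 → Fin 7 → Fin 7 → ℝ) (x y y' : V7) :
    br c x (y + y') = br c x y + br c x y' := by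
  funext k
  simp only [br, Pi.add_apply, ← Finset.sum_add_distrib]
  exact Finset.sum_congr rfl fun i _ => Finset.sum_congr rfl fun j _ => by ring

lemma br_smul_right (c : Fin 7 → Fin 7 → Fin 7 → ℝ) (r : ℝ) (x y : V7) :
    br c x (r • y) = r • br c x y := by
  funext k
  simp only [br, Pi.smul_apply, smul_eq_mul, Finset.mul_sum]
  exact Finset.sum_congr rfl fun i _ => Finset.sum_congr rfl fun j _ => by ring

lemma br_zero_left (c : Fin 7 → Fin 7 → Fin 7 → ℝ) (y : V7) : br c 0 y = 0 := by
  funext k; simp [br]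

lemma br_zero_right (c : Fin 7 → Fin 7 → Fin 7 → ℝ) (x : V7) : br c x 0 = 0 := by
  funext k; simp [br]

/-- The space of derivations of the algebra `(ℝ⁷, br c)`, i.e. the linear maps `D` with
`D (μ x y) = μ (D x) y + μ x (D y)` for all `x, y`, as a submodule of the endomorphisms. -/
def derivations (c : Fin 7 → Fin 7 → Fin 7 → ℝ) : Submodule ℝ (Module.End ℝ V7) where
  carrier := {D | ∀ x y, D (br c x y) = br c (D x) y + br c x (D y)}
  add_mem' := by
    intro D E hD hE x y
    simp only [LinearMap.add_apply, hD x y, hE x y, br_add_left, br_add_right]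
    abel
  zero_mem' := by
    intro x y
    simp [br_zero_left, br_zero_right]
  smul_mem' := by
    intro r D hD x y
    simp only [LinearMap.smul_apply, hD x y, smul_add, br_smul_left, br_smul_right]

/-- The Jacobi identity for the bracket `br c`. -/
def Jacobi (c : Fin 7 → Fin 7 → Fin 7 → ℝ) : Prop :=
  ∀ x y z : V7, br c (br c x y) z + br c (br c y z) x + br c (br c z x) y = 0

/-- Skew-symmetry of the bracket `br c`. -/
def Skew (c : Fin 7 → Fin 7 → Fin 7 → ℝ) : Prop :=
  ∀ x y : V7, br c x y = - br c y x

/-- The diagonal endomorphism `diag (a 1, …, a 7)` of `ℝ⁷`, `e i ↦ a i • e i`. -/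
def diagL (a : Fin 7 → ℝ) : Module.End ℝ V7 :=
  LinearMap.pi fun i => a i • LinearMap.proj i

/-- Structure constants of the bracket `μ̃`. -/
def c12 : Fin 7 → Fin 7 → Fin 7 → ℝ :=
  toC [(0, 1, 2, 3 * Real.sqrt 34 / 68),
   (0, 2, 3, Real.sqrt 119 / 34),
   (0, 3, 4, 3 * Real.sqrt 187 / 187),
   (0, 3, 5, -(7 * Real.sqrt 374 / 748)),
   (0, 4, 6, Real.sqrt 374 / 68),
   (1, 2, 4, 3 * Real.sqrt 1309 / 374),
   (1, 2, 5, Real.sqrt 2618 / 374),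
   (1, 3, 6, 3 * Real.sqrt 34 / 68)]

/-! In coordinates the bracket is `muTilde`, with structure constants `s_ijk`. The Jacobiator
is alternating trilinear and its only component not vanishing identically is the `e₇`-component
`(s₁₃₄ s₂₄₇ - s₂₃₅ s₁₅₇) det(x₁₂₃, y₁₂₃, z₁₂₃)`, which vanishes because
`√1309 √374 = 11 √119 √34`. `diag(1,2,3,4,5,5,6)` is a derivation since every nonzero structure
constant `s_ijk` has `dᵢ + dⱼ = dₖ`. The moment map is diagonal: its only possible off-diagonal
entry couples `e₅` and `e₆` and equals `2 (s₁₄₅ s₁₄₆ + s₂₃₅ s₂₃₆) = 0`, while its diagonal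
entries are signed sums of the squares `s_ijk²`. -/

lemma toC_swap (L : List (Fin 7 × Fin 7 × Fin 7 × ℝ)) (i j k : Fin 7) :
    toC L j i k = -toC L i j k := by
  induction L with
  | nil => simp [toC]
  | cons t L ih =>
    simp only [toC, List.map_cons, List.sum_cons] at *
    rw [ih]; ring

lemma skew_toC (L : List (Fin 7 × Fin 7 × Fin 7 × ℝ)) : Skew (toC L) := by
  intro x y
  funext k
  simp only [br, Pi.neg_apply, ← Finset.sum_neg_distrib]
  rw [Finset.sum_comm]
  refine Finset.sum_congr rfl fun i _ => Finset.sum_congr rfl fun j _ => ?_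
  rw [toC_swap]
  ring

lemma br_add (c c' : Fin 7 → Fin 7 → Fin 7 → ℝ) (x y : V7) :
    br (c + c') x y = br c x y + br c' x y := by
  funext k
  simp only [br, Pi.add_apply, mul_add, Finset.sum_add_distrib]

lemma toC_cons (t : Fin 7 × Fin 7 × Fin 7 × ℝ) (L : List (Fin 7 × Fin 7 × Fin 7 × ℝ)) :
    toC (t :: L) = (fun i j k => (if t.1 = i ∧ t.2.1 = j ∧ t.2.2.1 = k then t.2.2.2 else 0)
      - (if t.1 = j ∧ t.2.1 = i ∧ t.2.2.1 = k then t.2.2.2 else 0)) + toC L := by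
  funext i j k
  simp only [toC, List.map_cons, List.sum_cons, Pi.add_apply]

lemma br_toC (L : List (Fin 7 × Fin 7 × Fin 7 × ℝ)) (x y : V7) (k : Fin 7) :
    br (toC L) x y k =
      (L.map fun t => if t.2.2.1 = k then t.2.2.2 * (x t.1 * y t.2.1 - x t.2.1 * y t.1)
        else 0).sum := by
  induction L with
  | nil => simp [br, toC]
  | cons t L ih =>
    rw [toC_cons, br_add, Pi.add_apply, ih, List.map_cons, List.sum_cons]
    congr 1
    simp only [br, mul_sub, Finset.sum_sub_distrib, ite_and, mul_ite, mul_zero,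
      Finset.sum_ite_irrel, Finset.sum_const_zero, Finset.sum_ite_eq, Finset.mem_univ, if_true]
    split_ifs <;> ring

lemma diagL_apply (a : Fin 7 → ℝ) (v : V7) (i : Fin 7) : diagL a v i = a i * v i := rfl

lemma diagL_mem_derivations_toC (L : List (Fin 7 × Fin 7 × Fin 7 × ℝ)) (a : Fin 7 → ℝ)
    (h : ∀ t ∈ L, a t.1 + a t.2.1 = a t.2.2.1) : diagL a ∈ derivations (toC L) := by
  intro x y
  funext k
  simp only [Pi.add_apply, diagL_apply, br_toC]
  induction L with
  | nil => simp
  | cons t L ih =>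
    rw [List.forall_mem_cons] at h
    simp only [List.map_cons, List.sum_cons, mul_add, ih h.2]
    split_ifs with hk
    · rw [← hk, ← h.1]; ring
    · ring

lemma dot_e (v : V7) (j : Fin 7) : dot v (e j) = v j := by
  simp [dot, e, Pi.single_apply]

def momentForm (c : Fin 7 → Fin 7 → Fin 7 → ℝ) (x y : V7) : ℝ :=
  -2 * ∑ i, ∑ j, dot (br c x (e i)) (e j) * dot (br c y (e i)) (e j)
    + ∑ i, ∑ j, dot (br c (e i) (e j)) x * dot (br c (e i) (e j)) y

lemma eq_diagL_of_dot_e (m : Module.End ℝ V7) (a : Fin 7 → ℝ)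
    (h : ∀ x j, dot (m x) (e j) = a j * x j) : m = diagL a :=
  LinearMap.ext fun x => funext fun j => by rw [← dot_e (m x), h, diagL_apply]

lemma smul_one_add_smul_diagL (r s : ℝ) (a : Fin 7 → ℝ) :
    r • (1 : Module.End ℝ V7) + s • diagL a = diagL fun i => r + s * a i :=
  LinearMap.ext fun x => funext fun i => by
    simp only [LinearMap.add_apply, LinearMap.smul_apply, Module.End.one_apply, Pi.add_apply,
      Pi.smul_apply, smul_eq_mul, diagL_apply]
    ring

-- `s_ijk` is the coefficient of `e_k` in `[e_i, e_j]`, with the paper's indices from 1; the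
-- coordinates of `V7` are indexed from 0.
def s₁₂₃ : ℝ := 3 * Real.sqrt 34 / 68
def s₁₃₄ : ℝ := Real.sqrt 119 / 34
def s₁₄₅ : ℝ := 3 * Real.sqrt 187 / 187
def s₁₄₆ : ℝ := -(7 * Real.sqrt 374 / 748)
def s₁₅₇ : ℝ := Real.sqrt 374 / 68
def s₂₃₅ : ℝ := 3 * Real.sqrt 1309 / 374
def s₂₃₆ : ℝ := Real.sqrt 2618 / 374
def s₂₄₇ : ℝ := 3 * Real.sqrt 34 / 68

lemma s₁₂₃_sq : s₁₂₃ ^ 2 = 153 / 2312 := by norm_num [s₁₂₃, div_pow, mul_pow]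
lemma s₁₃₄_sq : s₁₃₄ ^ 2 = 119 / 1156 := by norm_num [s₁₃₄, div_pow, mul_pow]
lemma s₁₄₅_sq : s₁₄₅ ^ 2 = 9 / 187 := by norm_num [s₁₄₅, div_pow, mul_pow]
lemma s₁₄₆_sq : s₁₄₆ ^ 2 = 49 / 1496 := by norm_num [s₁₄₆, div_pow, mul_pow]
lemma s₁₅₇_sq : s₁₅₇ ^ 2 = 11 / 136 := by norm_num [s₁₅₇, div_pow, mul_pow]
lemma s₂₃₅_sq : s₂₃₅ ^ 2 = 63 / 748 := by norm_num [s₂₃₅, div_pow, mul_pow]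
lemma s₂₃₆_sq : s₂₃₆ ^ 2 = 7 / 374 := by norm_num [s₂₃₆, div_pow, mul_pow]
lemma s₂₄₇_sq : s₂₄₇ ^ 2 = 153 / 2312 := by norm_num [s₂₄₇, div_pow, mul_pow]

lemma sqrt1309_mul_sqrt374 : √1309 * √374 = 11 * (√119 * √34) := by
  rw [← Real.sqrt_mul (by norm_num), ← Real.sqrt_mul (by norm_num),
    show (1309 * 374 : ℝ) = 11 ^ 2 * (119 * 34) by norm_num,
    Real.sqrt_mul (by norm_num), Real.sqrt_sq (by norm_num)]

lemma sqrt1309_mul_sqrt2618 : √1309 * √2618 = 7 * (√187 * √374) := by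
  rw [← Real.sqrt_mul (by norm_num), ← Real.sqrt_mul (by norm_num),
    show (1309 * 2618 : ℝ) = 7 ^ 2 * (187 * 374) by norm_num,
    Real.sqrt_mul (by norm_num), Real.sqrt_sq (by norm_num)]

lemma s₂₃₅_mul_s₁₅₇ : s₂₃₅ * s₁₅₇ = s₁₃₄ * s₂₄₇ := by
  simp only [s₂₃₅, s₁₅₇, s₁₃₄, s₂₄₇]
  linear_combination (3 / 25432) * sqrt1309_mul_sqrt374

lemma s₁₄₅_mul_s₁₄₆_add_s₂₃₅_mul_s₂₃₆ : s₁₄₅ * s₁₄₆ + s₂₃₅ * s₂₃₆ = 0 := by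
  simp only [s₁₄₅, s₁₄₆, s₂₃₅, s₂₃₆]
  linear_combination (3 / 139876) * sqrt1309_mul_sqrt2618

def muTilde (x y : V7) : V7 :=
  ![0, 0, s₁₂₃ * (x 0 * y 1 - x 1 * y 0), s₁₃₄ * (x 0 * y 2 - x 2 * y 0),
    s₁₄₅ * (x 0 * y 3 - x 3 * y 0) + s₂₃₅ * (x 1 * y 2 - x 2 * y 1),
    s₁₄₆ * (x 0 * y 3 - x 3 * y 0) + s₂₃₆ * (x 1 * y 2 - x 2 * y 1),
    s₁₅₇ * (x 0 * y 4 - x 4 * y 0) + s₂₄₇ * (x 1 * y 3 - x 3 * y 1)]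

lemma br_c12 : br c12 = muTilde := by
  funext x y k
  rw [c12, br_toC]
  fin_cases k <;> simp [muTilde, s₁₂₃, s₁₃₄, s₁₄₅, s₁₄₆, s₁₅₇, s₂₃₅, s₂₃₆, s₂₄₇]

lemma jacobi_c12 : Jacobi c12 := by
  intro x y z
  rw [br_c12]
  funext k
  fin_cases k <;> simp [muTilde]
  on_goal 4 =>
    linear_combination (x 2 * y 1 * z 0 - x 0 * y 1 * z 2 + x 0 * y 2 * z 1 - x 1 * y 2 * z 0
      + x 1 * y 0 * z 2 - x 2 * y 0 * z 1) * s₂₃₅_mul_s₁₅₇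
  all_goals ring

lemma momentForm_c12_e (x : V7) (j : Fin 7) :
    momentForm c12 x (e j) = ![-45/68, -8/17, -19/68, -3/34, 7/68, 7/68, 5/17] j * x j := by
  rw [momentForm, br_c12]
  simp only [Fin.sum_univ_seven, dot]
  fin_cases j <;> simp [muTilde, e] <;>
    grind [s₁₂₃_sq, s₁₃₄_sq, s₁₄₅_sq, s₁₄₆_sq, s₁₅₇_sq, s₂₃₅_sq, s₂₃₆_sq, s₂₄₇_sq,
    s₁₄₅_mul_s₁₄₆_add_s₂₃₅_mul_s₂₃₆]

/-- The bracket satisfies the Jacobi identity (and is skew-symmetric),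
`D` is a derivation of it, and the unnormalized moment map `m(μ̃)` — i.e. the endomorphism
`m` of `ℝ⁷` determined by
`⟨m x, y⟩ = -2 ∑ᵢⱼ ⟨μ̃(x,eᵢ),eⱼ⟩⟨μ̃(y,eᵢ),eⱼ⟩ + ∑ᵢⱼ ⟨μ̃(eᵢ,eⱼ),x⟩⟨μ̃(eᵢ,eⱼ),y⟩` —
equals `-(29/34) • Id + 13/68 • D`, which is the indicated diagonal map. -/
theorem stmt :
    Skew c12 ∧ Jacobi c12 ∧
    diagL ![1, 2, 3, 4, 5, 5, 6] ∈ derivations c12 ∧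
    ∀ m : Module.End ℝ V7,
      (∀ x y : V7, dot (m x) y =
          -2 * ∑ i, ∑ j, dot (br c12 x (e i)) (e j) * dot (br c12 y (e i)) (e j)
          + ∑ i, ∑ j, dot (br c12 (e i) (e j)) x * dot (br c12 (e i) (e j)) y) →
      m = (-(29/34) : ℝ) • (1 : Module.End ℝ V7) + (13/68 : ℝ) • diagL ![1, 2, 3, 4, 5, 5, 6]
      ∧ m = diagL ![-45/68, -8/17, -19/68, -3/34, 7/68, 7/68, 5/17] := by
  refine ⟨skew_toC _, jacobi_c12, diagL_mem_derivations_toC _ _ (by simp; norm_num),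
    fun m hm => ?_⟩
  have hdiag : m = diagL ![-45/68, -8/17, -19/68, -3/34, 7/68, 7/68, 5/17] :=
    eq_diagL_of_dot_e m _ fun x j => (hm x (e j)).trans (momentForm_c12_e x j)
  refine ⟨?_, hdiag⟩
  rw [hdiag, smul_one_add_smul_diagL]
  congr 1
  funext i
  fin_cases i <;> norm_num
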